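/- Let X ⊂ ℝ^{2n} be a centrally symmetric convex body. Then vol(P ⋉_ω X) = (4n+3)/((n+1)(2n+1)) · vol(X), where P ⋉_ω X = {(v,x) ∈ P × ℝ^{2n} : |ω₂(u,v)| + ‖x‖_X ≤ 1} ⊂ ℝ^{2n+2}, P = conv{±(1,1),±(1,0),±(0,1)}, u = (1,1). -/

import Mathlib

open Set

/-- The standard symplectic form on ℝ^{2n} = (Fin n → ℝ) × (Fin n → ℝ). -/
noncomputable def symForm (n : ℕ) (x y : (Fin n → ℝ) × (Fin n → ℝ)) : ℝ :=
  ∑ i, (x.1 i * y.2 i - x.2 i * y.1 i)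

/-- The symplectic polar of a set in ℝ^{2n}. -/
def sPolar (n : ℕ) (X : Set ((Fin n → ℝ) × (Fin n → ℝ))) : Set ((Fin n → ℝ) × (Fin n → ℝ)) :=
  {y | ∀ x ∈ X, symForm n x y ≤ 1}

/-- The standard area (symplectic) form on ℝ². -/
noncomputable def omega2 (v w : ℝ × ℝ) : ℝ := v.1 * w.2 - v.2 * w.1

/-- The hexagon P = conv{±(1,1), ±(1,0), ±(0,1)}. -/
noncomputable def hexP : Set (ℝ × ℝ) :=
  convexHull ℝ {(1,1), (1,0), (0,1), (-1,-1), (-1,0), (0,-1)}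

/-- ℝ^{2n+2} = ℝ² × ℝ^{2n}. -/
abbrev Amb (n : ℕ) := (ℝ × ℝ) × ((Fin n → ℝ) × (Fin n → ℝ))

/-- The direct-sum symplectic form on ℝ² × ℝ^{2n}. -/
noncomputable def symFormS (n : ℕ) (p q : Amb n) : ℝ :=
  omega2 p.1 q.1 + symForm n p.2 q.2

/-- The symplectic polar of a set in ℝ² × ℝ^{2n}. -/
def sPolarS (n : ℕ) (S : Set (Amb n)) : Set (Amb n) :=
  {q | ∀ p ∈ S, symFormS n p q ≤ 1}

/-- The symplectic P-suspension of a centrally symmetric convex body X ⊂ ℝ^{2n}. -/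
noncomputable def susp (n : ℕ) (X : Set ((Fin n → ℝ) × (Fin n → ℝ))) : Set (Amb n) :=
  {p | p.1 ∈ hexP ∧ |omega2 (1,1) p.1| + gauge X p.2 ≤ 1}

/-!
Over `v = (x, y) ∈ P` the fibre of the suspension is the gauge sublevel set
`{‖·‖_X ≤ 1 - |y - x|} = (1 - |y - x|) • X`, of volume `(1 - |y - x|) ^ (2n) · vol X`, so by
Fubini the volume is `vol X · ∫_P (1 - |y - x|) ^ (2n)`. Since
`P = {|x| ≤ 1, |y| ≤ 1, |y - x| ≤ 1}`, shearing to `s = y - x` leaves over each `s ∈ [-1, 1]`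
an interval of length `2 - |s|`, and
`∫_{-1}^{1} (2 - |s|) (1 - |s|) ^ (2n) ds = 2 / (2n + 1) + 2 / (2n + 2)`.
-/

open Set MeasureTheory Topology Pointwise
open scoped ENNReal

theorem Convex.smul_add_smul_mem_of_zero_mem {E : Type*} [AddCommGroup E] [Module ℝ E]
    {s : Set E} (hs : Convex ℝ s) (h0 : (0 : E) ∈ s) {x y : E} (hx : x ∈ s) (hy : y ∈ s)
    {a b : ℝ} (ha : 0 ≤ a) (hb : 0 ≤ b) (hab : a + b ≤ 1) : a • x + b • y ∈ s := by
  simpa [Fin.sum_univ_three] using hs.sum_mem (t := Finset.univ) (w := ![a, b, 1 - a - b])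
    (z := ![x, y, 0]) (by simp [Fin.forall_fin_succ, ha, hb]; linarith)
    (by simp [Fin.sum_univ_three]) (by simp [Fin.forall_fin_succ, hx, hy, h0])

theorem convex_setOf_abs_le_one {E : Type*} [AddCommGroup E] [Module ℝ E] (ℓ : E →ₗ[ℝ] ℝ) :
    Convex ℝ {v | |ℓ v| ≤ 1} := by
  convert (convex_closedBall (0 : ℝ) 1).linear_preimage ℓ using 1
  ext; simp [Real.norm_eq_abs]

theorem hexP_subset_setOf : hexP ⊆ {v | |v.1| ≤ 1 ∧ |v.2| ≤ 1 ∧ |v.2 - v.1| ≤ 1} := by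
  refine convexHull_min ?_ ?_
  · intro v hv
    simp only [mem_insert_iff, mem_singleton_iff] at hv
    rcases hv with rfl | rfl | rfl | rfl | rfl | rfl <;> norm_num
  · simp only [ofPred_and]
    exact (convex_setOf_abs_le_one (.fst ℝ ℝ ℝ)).inter ((convex_setOf_abs_le_one (.snd ℝ ℝ ℝ)).inter
      (convex_setOf_abs_le_one (.snd ℝ ℝ ℝ - .fst ℝ ℝ ℝ)))

theorem hexP_eq : hexP = {v | |v.1| ≤ 1 ∧ |v.2| ≤ 1 ∧ |v.2 - v.1| ≤ 1} := by
  refine hexP_subset_setOf.antisymm ?_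
  rintro ⟨x, y⟩ ⟨hx, hy, hxy⟩
  simp only [abs_le] at hx hy hxy
  have hconv : Convex ℝ hexP := convex_convexHull ℝ _
  have vertex : ∀ v ∈ ({(1,1), (1,0), (0,1), (-1,-1), (-1,0), (0,-1)} : Set (ℝ × ℝ)),
      v ∈ hexP := subset_convexHull ℝ _
  have zero_mem : (0 : ℝ × ℝ) ∈ hexP := by
    convert hconv (vertex (1,1) (by simp)) (vertex (-1,-1) (by simp)) (a := 1 / 2) (b := 1 / 2)
      (by norm_num) (by norm_num) (by norm_num) using 1
    ext <;> norm_num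
  -- each of the six triangles cut out by the diagonals is spanned by 0 and two adjacent vertices
  have combo : ∀ {g₁ g₂ : ℝ × ℝ} (a b : ℝ), g₁ ∈ hexP → g₂ ∈ hexP → 0 ≤ a → 0 ≤ b → a + b ≤ 1 →
      (x, y) = a • g₁ + b • g₂ → (x, y) ∈ hexP := fun a b h₁ h₂ ha hb hab h =>
    h ▸ hconv.smul_add_smul_mem_of_zero_mem zero_mem h₁ h₂ ha hb hab
  rcases le_total 0 x with hx0 | hx0 <;> rcases le_total 0 y with hy0 | hy0
  · rcases le_total x y with h | h
    · exact combo x (y - x) (vertex (1,1) (by simp)) (vertex (0,1) (by simp))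
        hx0 (by linarith) (by linarith) (by ext <;> simp)
    · exact combo y (x - y) (vertex (1,1) (by simp)) (vertex (1,0) (by simp))
        hy0 (by linarith) (by linarith) (by ext <;> simp)
  · exact combo x (-y) (vertex (1,0) (by simp)) (vertex (0,-1) (by simp))
      hx0 (by linarith) (by linarith) (by ext <;> simp)
  · exact combo (-x) y (vertex (-1,0) (by simp)) (vertex (0,1) (by simp))
      (by linarith) hy0 (by linarith) (by ext <;> simp)
  · rcases le_total x y with h | h
    · exact combo (-y) (y - x) (vertex (-1,-1) (by simp)) (vertex (-1,0) (by simp))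
        (by linarith) (by linarith) (by linarith) (by ext <;> simp)
    · exact combo (-x) (x - y) (vertex (-1,-1) (by simp)) (vertex (0,-1) (by simp))
        (by linarith) (by linarith) (by linarith) (by ext <;> simp)

theorem isClosed_hexP : IsClosed hexP := by
  rw [hexP_eq, ofPred_and, ofPred_and]
  exact (isClosed_le (by fun_prop) (by fun_prop)).inter
    ((isClosed_le (by fun_prop) (by fun_prop)).inter (isClosed_le (by fun_prop) (by fun_prop)))

theorem volume_setOf_mk_add_mem_hexP (s : ℝ) :
    volume {x : ℝ | (x, x + s) ∈ hexP} =
      (Icc (-1) 1).indicator (fun s ↦ ENNReal.ofReal (2 - |s|)) s := by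
  by_cases hs : s ∈ Icc (-1) 1
  · have hslice : {x : ℝ | (x, x + s) ∈ hexP} = Icc (-1) 1 ∩ Icc (-1 - s) (1 - s) := by
      ext x
      simp only [hexP_eq, mem_ofPred_eq, add_sub_cancel_left, mem_inter_iff, mem_Icc, abs_le]
      constructor
      · rintro ⟨hx, hxs, -⟩
        exact ⟨hx, by linarith, by linarith⟩
      · rintro ⟨hx, hxs₁, hxs₂⟩
        exact ⟨hx, ⟨by linarith, by linarith⟩, hs⟩
    rw [hslice, Icc_inter_Icc, Real.volume_Icc, indicator_of_mem hs]
    congr 1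
    rcases le_total 0 s with h | h
    · rw [abs_of_nonneg h, max_eq_left (by linarith), min_eq_right (by linarith)]
      ring
    · rw [abs_of_nonpos h, max_eq_right (by linarith), min_eq_left (by linarith)]
      ring
  · have hslice : {x : ℝ | (x, x + s) ∈ hexP} = ∅ := by
      ext x
      simp only [hexP_eq, mem_ofPred_eq, add_sub_cancel_left, mem_empty_iff_false, iff_false]
      exact fun h ↦ hs (abs_le.1 h.2.2)
    rw [hslice, measure_empty, indicator_of_notMem hs]

theorem lintegral_hexP_comp_sub {φ : ℝ → ℝ≥0∞} (hφ : Measurable φ) :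
    ∫⁻ v in hexP, φ (v.2 - v.1) = ∫⁻ s in Icc (-1) 1, ENNReal.ofReal (2 - |s|) * φ s := by
  have hmeas : Measurable (hexP.indicator fun v : ℝ × ℝ ↦ φ (v.2 - v.1)) :=
    (hφ.comp (by fun_prop)).indicator isClosed_hexP.measurableSet
  rw [← lintegral_indicator isClosed_hexP.measurableSet, Measure.volume_eq_prod,
    ← (measurePreserving_prod_add_swap volume volume).lintegral_comp hmeas,
    lintegral_prod (fun z ↦ hexP.indicator _ (z.2, z.2 + z.1))
      (hmeas.comp (measurable_snd.prodMk (by fun_prop))).aemeasurable,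
    ← lintegral_indicator measurableSet_Icc]
  congr 1 with s
  have hslice : MeasurableSet {x : ℝ | (x, x + s) ∈ hexP} :=
    (isClosed_hexP.preimage (by fun_prop)).measurableSet
  calc ∫⁻ x, hexP.indicator (fun v ↦ φ (v.2 - v.1)) (x, x + s)
      = ∫⁻ x, {x : ℝ | (x, x + s) ∈ hexP}.indicator (fun _ ↦ φ s) x := by
        congr 1 with x
        simp only [indicator, mem_ofPred_eq, add_sub_cancel_left]
    _ = _ := by
        rw [lintegral_indicator_const hslice, volume_setOf_mk_add_mem_hexP, mul_comm]
        by_cases hs : s ∈ Icc (-1) 1 <;> simp [hs]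

theorem setOf_gauge_le_eq_smul {E : Type*} [AddCommGroup E] [Module ℝ E] [TopologicalSpace E]
    [IsTopologicalAddGroup E] [ContinuousSMul ℝ E] {X : Set E} (hconv : Convex ℝ X)
    (hclosed : IsClosed X) (h0 : X ∈ 𝓝 0) {t : ℝ} (ht : 0 < t) :
    {x | gauge X x ≤ t} = t • X := by
  ext x
  have hmem := gauge_le_one_iff_mem_closure hconv h0 (x := t⁻¹ • x)
  rw [hclosed.closure_eq] at hmem
  rw [mem_smul_set_iff_inv_smul_mem₀ ht.ne', ← hmem, gauge_smul_of_nonneg (inv_nonneg.2 ht.le),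
    smul_eq_mul, mem_ofPred_eq, inv_mul_le_iff₀ ht, mul_one]

theorem addHaar_setOf_gauge_le {E : Type*} [NormedAddCommGroup E] [NormedSpace ℝ E]
    [MeasurableSpace E] [BorelSpace E] [FiniteDimensional ℝ E] (μ : Measure E)
    [μ.IsAddHaarMeasure] {X : Set E} (hconv : Convex ℝ X) (hclosed : IsClosed X) (h0 : X ∈ 𝓝 0)
    {t : ℝ} (ht : 0 < t) :
    μ {x | gauge X x ≤ t} = ENNReal.ofReal (t ^ Module.finrank ℝ E) * μ X := by
  rw [setOf_gauge_le_eq_smul hconv hclosed h0 ht, Measure.addHaar_smul_of_nonneg μ ht.le]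

theorem integral_two_sub_abs_mul_one_sub_abs_pow (k : ℕ) :
    ∫ s in (-1 : ℝ)..1, (2 - |s|) * (1 - |s|) ^ k = 2 * (1 / (k + 1) + 1 / (k + 2)) := by
  have hpow : ∀ j : ℕ, ∫ s in (0 : ℝ)..1, (1 - s) ^ j = 1 / (j + 1) := by
    intro j
    simp [intervalIntegral.integral_comp_sub_left (fun x ↦ x ^ j)]
  have hhalf : ∫ s in (0 : ℝ)..1, (2 - |s|) * (1 - |s|) ^ k = 1 / (k + 1) + 1 / (k + 2) := by
    have hcongr : EqOn (fun s : ℝ ↦ (2 - |s|) * (1 - |s|) ^ k)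
        (fun s ↦ (1 - s) ^ k + (1 - s) ^ (k + 1)) (uIcc 0 1) := by
      intro s hs
      rw [uIcc_of_le zero_le_one] at hs
      simp only [abs_of_nonneg hs.1]
      ring
    rw [intervalIntegral.integral_congr hcongr, intervalIntegral.integral_add
      ((by fun_prop : Continuous fun s : ℝ ↦ (1 - s) ^ k).intervalIntegrable _ _)
      ((by fun_prop : Continuous fun s : ℝ ↦ (1 - s) ^ (k + 1)).intervalIntegrable _ _),
      hpow, hpow]
    push_cast
    ring
  have hneg : ∫ s in (-1 : ℝ)..0, (2 - |s|) * (1 - |s|) ^ k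
      = ∫ s in (0 : ℝ)..1, (2 - |s|) * (1 - |s|) ^ k := by
    simpa using (intervalIntegral.integral_comp_neg (a := (0 : ℝ)) (b := 1)
      (fun s ↦ (2 - |s|) * (1 - |s|) ^ k)).symm
  have hint : ∀ a b : ℝ, IntervalIntegrable (fun s : ℝ ↦ (2 - |s|) * (1 - |s|) ^ k) volume a b :=
    fun a b ↦ (by fun_prop : Continuous _).intervalIntegrable a b
  rw [← intervalIntegral.integral_add_adjacent_intervals (hint _ _) (hint _ _), hneg, hhalf]
  ring

theorem lintegral_hexP_one_sub_abs_sub_pow (n : ℕ) :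
    ∫⁻ v in hexP, ENNReal.ofReal ((1 - |v.2 - v.1|) ^ (2 * n)) =
      ENNReal.ofReal ((4 * n + 3) / ((n + 1) * (2 * n + 1))) := by
  have hnonneg : ∀ s ∈ Icc (-1 : ℝ) 1, 0 ≤ 2 - |s| := fun s hs ↦ by
    linarith [abs_le.2 hs]
  rw [lintegral_hexP_comp_sub (φ := fun d ↦ ENNReal.ofReal ((1 - |d|) ^ (2 * n))) (by fun_prop),
    setLIntegral_congr_fun measurableSet_Icc fun s hs ↦ (ENNReal.ofReal_mul (hnonneg s hs)).symm,
    ← ofReal_integral_eq_lintegral_ofReal, integral_Icc_eq_integral_Ioc,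
    ← intervalIntegral.integral_of_le (by norm_num), integral_two_sub_abs_mul_one_sub_abs_pow]
  · congr 1
    push_cast
    field_simp
    ring
  · exact (by fun_prop : Continuous fun s : ℝ ↦ (2 - |s|) * (1 - |s|) ^ (2 * n)).integrableOn_Icc
  · filter_upwards [ae_restrict_mem measurableSet_Icc] with s hs
    exact mul_nonneg (hnonneg s hs) (Even.pow_nonneg (even_two_mul n) _)

theorem volume_setOf_abs_sub_eq (c : ℝ) : volume {v : ℝ × ℝ | |v.2 - v.1| = c} = 0 := by
  rw [Measure.volume_eq_prod, Measure.prod_apply (measurableSet_eq_fun (by fun_prop) (by fun_prop))]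
  have hslice : ∀ x : ℝ, volume {y : ℝ | |y - x| = c} = 0 := by
    refine fun x ↦ measure_mono_null (t := {x + c, x - c}) (fun y hy ↦ ?_)
      ((toFinite _).measure_zero _)
    rcases eq_or_eq_neg_of_abs_eq hy with h | h
    · exact Or.inl (show y = x + c by linarith)
    · exact Or.inr (show y = x - c by linarith)
  exact (lintegral_congr fun x ↦ hslice x).trans lintegral_zero

theorem isClosed_susp {n : ℕ} {X : Set ((Fin n → ℝ) × (Fin n → ℝ))} (hconv : Convex ℝ X)
    (h0 : X ∈ 𝓝 0) : IsClosed (susp n X) := by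
  have hgauge := continuous_gauge hconv h0
  have hcont : Continuous fun p : Amb n ↦ |omega2 (1, 1) p.1| + gauge X p.2 := by
    unfold omega2
    fun_prop
  exact (isClosed_hexP.preimage continuous_fst).inter (isClosed_le hcont continuous_const)

theorem preimage_mk_susp (n : ℕ) (X : Set ((Fin n → ℝ) × (Fin n → ℝ))) (v : ℝ × ℝ) :
    Prod.mk v ⁻¹' susp n X = {x | v ∈ hexP ∧ gauge X x ≤ 1 - |v.2 - v.1|} := by
  ext x
  simp only [susp, omega2, mem_preimage, mem_ofPred_eq, one_mul, le_sub_iff_add_le']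

theorem ae_volume_preimage_mk_susp {n : ℕ} {X : Set ((Fin n → ℝ) × (Fin n → ℝ))}
    (hconv : Convex ℝ X) (hclosed : IsClosed X) (h0 : X ∈ 𝓝 0) :
    ∀ᵐ v : ℝ × ℝ, volume (Prod.mk v ⁻¹' susp n X) =
      hexP.indicator (fun v ↦ ENNReal.ofReal ((1 - |v.2 - v.1|) ^ (2 * n))) v * volume X := by
  -- off the null lines `|y - x| = 1`, where the fibre degenerates
  filter_upwards [measure_eq_zero_iff_ae_notMem.1 (volume_setOf_abs_sub_eq 1)] with v hv
  rw [preimage_mk_susp]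
  by_cases hvP : v ∈ hexP
  · have ht : 0 < 1 - |v.2 - v.1| :=
      sub_pos.2 (lt_of_le_of_ne (hexP_subset_setOf hvP).2.2 hv)
    have hdim : Module.finrank ℝ ((Fin n → ℝ) × (Fin n → ℝ)) = 2 * n := by
      simp [Module.finrank_prod, two_mul]
    have : (volume : Measure ((Fin n → ℝ) × (Fin n → ℝ))).IsAddHaarMeasure :=
      Measure.prod.instIsAddHaarMeasure _ _
    simp only [hvP, true_and, indicator_of_mem hvP]
    rw [addHaar_setOf_gauge_le volume hconv hclosed h0 ht, hdim]
  · simp [hvP]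

open MeasureTheory in
theorem stmt7_general (n : ℕ) (X : Set ((Fin n → ℝ) × (Fin n → ℝ)))
    (hconv : Convex ℝ X) (hcomp : IsCompact X)
    (h0 : (0 : (Fin n → ℝ) × (Fin n → ℝ)) ∈ interior X) :
    volume (susp n X) =
      ENNReal.ofReal ((4 * n + 3) / ((n + 1) * (2 * n + 1))) * volume X := by
  have hX : X ∈ 𝓝 0 := mem_interior_iff_mem_nhds.1 h0
  have hweight : Measurable fun v : ℝ × ℝ ↦ ENNReal.ofReal ((1 - |v.2 - v.1|) ^ (2 * n)) := by
    fun_prop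
  rw [Measure.volume_eq_prod, Measure.prod_apply (isClosed_susp hconv hX).measurableSet,
    lintegral_congr_ae (ae_volume_preimage_mk_susp hconv hcomp.isClosed hX),
    lintegral_mul_const _ (hweight.indicator isClosed_hexP.measurableSet),
    lintegral_indicator isClosed_hexP.measurableSet, lintegral_hexP_one_sub_abs_sub_pow]

open MeasureTheory in
theorem stmt7 (n : ℕ) (X : Set ((Fin n → ℝ) × (Fin n → ℝ)))
    (hconv : Convex ℝ X) (hcomp : IsCompact X) (hsym : ∀ x ∈ X, -x ∈ X)
    (h0 : (0 : (Fin n → ℝ) × (Fin n → ℝ)) ∈ interior X) :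
    volume (susp n X) =
      ENNReal.ofReal ((4 * n + 3) / ((n + 1) * (2 * n + 1))) * volume X :=
  stmt7_general n X hconv hcomp h0
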